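/- arXiv:1703.10506 — 3 statements merged into one kernel-verified Lean document; each statement's English description precedes it below -/
import Mathlib

section
/- Let L be an n-dimensional algebra over ℂ with n ≥ 2 such that dim(span of all products) ≤ n − 2 and the annihilator Ann(L) = {x : xy = yx = 0 for all y} is nonzero. Then there exists a map Δ : L → L which is a 2-local derivation (for all x, y ∈ L there is a derivation D with D(x) = Δ(x) and D(y) = Δ(y)) but is not a derivation (in fact Δ is not linear). -/
/-!
Choose a linear map `φ : L → ℂ²` that is surjective and kills `L²` (possible since
`dim L/L² ≥ 2`) and a nonzero `z ∈ Ann(L)`, and put `Δ x = f(φ x) z` with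
`f(y₁, y₂) = y₁² / y₂`. Since `f` is homogeneous of degree one, on any two points of `ℂ²` it
agrees with a linear functional `g`: if the points are dependent this is homogeneity, otherwise
the values can be prescribed freely. Then `(g ∘ φ)(·) z` is a derivation, because it kills `L²`
and takes values in `Ann(L)`, and it agrees with `Δ` at the two given points. But `f` is not
additive, so neither is `Δ`.
-/

open Module

section Homogeneous

variable {K V : Type*} [Field K] [AddCommGroup V] [Module K V] {f : V → K}

lemma exists_dual_apply_eq_of_map_smul (hf : ∀ (t : K) (v : V), f (t • v) = t * f v) (w : V) :
    ∃ g : Dual K V, g w = f w := by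
  rcases eq_or_ne w 0 with rfl | hw
  · exact ⟨0, by simpa using (hf 0 0).symm⟩
  · obtain ⟨φ, hφ⟩ := Projective.exists_dual_eq_one K hw
    exact ⟨f w • φ, by simp [hφ]⟩

lemma exists_dual_apply_eq_pair_of_map_smul (hf : ∀ (t : K) (v : V), f (t • v) = t * f v)
    (v w : V) : ∃ g : Dual K V, g v = f v ∧ g w = f w := by
  obtain ⟨g₀, hg₀⟩ := exists_dual_apply_eq_of_map_smul hf w
  by_cases hv : v ∈ K ∙ w
  · obtain ⟨t, rfl⟩ := Submodule.mem_span_singleton.1 hv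
    exact ⟨g₀, by rw [map_smul, hg₀, hf, smul_eq_mul], hg₀⟩
  · obtain ⟨g₁, hg₁v, hg₁⟩ := Submodule.exists_dual_map_eq_bot_of_notMem hv inferInstance
    have hg₁w : g₁ w = 0 := by
      simpa [hg₁] using Submodule.mem_map_of_mem (f := g₁) (Submodule.mem_span_singleton_self w)
    refine ⟨g₀ + ((f v - g₀ v) / g₁ v) • g₁, ?_, ?_⟩
    · simp [div_mul_cancel₀ _ hg₁v]
    · simp [hg₀, hg₁w]

end Homogeneous

section SqDiv

variable {K : Type*} [Field K]

/-- The paper's `f`; its value `0` at `y₂ = 0` comes from `x / 0 = 0`. -/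
def sqDiv (p : K × K) : K := p.1 ^ 2 / p.2

lemma sqDiv_smul (t : K) (p : K × K) : sqDiv (t • p) = t * sqDiv p := by
  rcases eq_or_ne t 0 with rfl | ht
  · simp [sqDiv]
  · simp only [sqDiv, Prod.smul_fst, Prod.smul_snd, smul_eq_mul]
    field_simp

lemma sqDiv_add_ne : sqDiv ((1, 1) + (0, -1) : K × K) ≠ sqDiv (1, 1) + sqDiv (0, -1) := by
  norm_num [sqDiv]

lemma not_forall_sqDiv_comp_map_add {V W : Type*} [AddCommGroup V] [Module K V]
    [AddCommGroup W] [Module K W] {φ : V →ₗ[K] K × K} (hφ : Function.Surjective φ)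
    {z : W} (hz : z ≠ 0) :
    ¬ ∀ x y : V, sqDiv (φ (x + y)) • z = sqDiv (φ x) • z + sqDiv (φ y) • z := by
  intro h
  obtain ⟨x, hx⟩ := hφ (1, 1)
  obtain ⟨y, hy⟩ := hφ (0, -1)
  have hxy := h x y
  rw [map_add, hx, hy, ← add_smul] at hxy
  exact sqDiv_add_ne (smul_left_injective K hz hxy)

end SqDiv

lemma exists_surjective_prod_of_two_le_finrank {K W : Type*} [Field K] [AddCommGroup W]
    [Module K W] [FiniteDimensional K W] (h : 2 ≤ finrank K W) :
    ∃ ψ : W →ₗ[K] K × K, Function.Surjective ψ := by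
  let b := finBasis K W
  let i : Fin (finrank K W) := ⟨0, by omega⟩
  let j : Fin (finrank K W) := ⟨1, by omega⟩
  have hij : i ≠ j := by simp [i, j, Fin.ext_iff]
  refine ⟨(b.coord i).prod (b.coord j), fun p => ⟨p.1 • b i + p.2 • b j, ?_⟩⟩
  simp [hij, hij.symm]

lemma exists_surjective_prod_le_ker {K V : Type*} [Field K] [AddCommGroup V] [Module K V]
    {M : Submodule K V} [FiniteDimensional K (V ⧸ M)] (h : 2 ≤ finrank K (V ⧸ M)) :
    ∃ φ : V →ₗ[K] K × K, Function.Surjective φ ∧ M ≤ LinearMap.ker φ := by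
  obtain ⟨ψ, hψ⟩ := exists_surjective_prod_of_two_le_finrank h
  refine ⟨ψ ∘ₗ M.mkQ, hψ.comp M.mkQ_surjective, fun x hx => ?_⟩
  simp [(Submodule.Quotient.mk_eq_zero M).2 hx]

lemma smulRight_leibniz_of_annihilator {K L : Type*} [Field K] [NonUnitalNonAssocRing L]
    [Module K L] [SMulCommClass K L L] [IsScalarTower K L L] {g : L →ₗ[K] K}
    (hg : ∀ u v, g (u * v) = 0) {z : L} (hz : ∀ y, z * y = 0 ∧ y * z = 0) (u v : L) :
    g.smulRight z (u * v) = g.smulRight z u * v + u * g.smulRight z v := by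
  simp [hg, smul_mul_assoc, mul_smul_comm, (hz u).2, (hz v).1]

/-- An `n`-dimensional complex algebra (`n ≥ 2`) with `dim L² ≤ n - 2` and nonzero
annihilator admits a 2-local derivation which is not a derivation (not even additive). -/
theorem stmt_5 {L : Type*} [NonUnitalNonAssocRing L] [Module ℂ L]
    [SMulCommClass ℂ L L] [IsScalarTower ℂ L L] [FiniteDimensional ℂ L]
    (hn : 2 ≤ Module.finrank ℂ L)
    (hdim : Module.finrank ℂ (Submodule.span ℂ {z : L | ∃ x y : L, z = x * y}) ≤
      Module.finrank ℂ L - 2)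
    (hann : ∃ z : L, z ≠ 0 ∧ ∀ y : L, z * y = 0 ∧ y * z = 0) :
    ∃ Δ : L → L,
      (∀ x y : L, ∃ D : L →ₗ[ℂ] L, (∀ u v : L, D (u * v) = D u * v + u * D v) ∧
        D x = Δ x ∧ D y = Δ y) ∧
      (¬ ∃ D : L →ₗ[ℂ] L, (∀ u v : L, D (u * v) = D u * v + u * D v) ∧ ∀ x : L, D x = Δ x) ∧
      (¬ ∀ x y : L, Δ (x + y) = Δ x + Δ y) := by
  obtain ⟨z, hz, hzann⟩ := hann
  set M := Submodule.span ℂ {z : L | ∃ x y : L, z = x * y}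
  have hquot : 2 ≤ finrank ℂ (L ⧸ M) := by
    have := M.finrank_quotient_add_finrank
    omega
  obtain ⟨φ, hφ, hMφ⟩ := exists_surjective_prod_le_ker hquot
  have hφmul (u v : L) : φ (u * v) = 0 := hMφ (Submodule.subset_span ⟨u, v, rfl⟩)
  have hnonadd := not_forall_sqDiv_comp_map_add hφ hz
  refine ⟨fun x => sqDiv (φ x) • z, fun x y => ?_, ?_, hnonadd⟩
  · obtain ⟨g, hgx, hgy⟩ := exists_dual_apply_eq_pair_of_map_smul sqDiv_smul (φ x) (φ y)
    exact ⟨(g ∘ₗ φ).smulRight z, smulRight_leibniz_of_annihilator (by simp [hφmul]) hzann,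
      by simp [hgx], by simp [hgy]⟩
  · rintro ⟨D, -, hD⟩
    exact hnonadd fun x y => by simpa only [hD] using D.map_add x y
end

section
/- Let NF_n be the n-dimensional null-filiform Leibniz algebra with basis e₁,…,e_n and multiplication [e_i, e₁] = e_{i+1} for 1 ≤ i ≤ n−1 (all other products of basis elements zero). If D is a derivation of NF_n with D(e₁) = Σ_{i=1}^n α_i e_i, then D(e_j) = j·α₁·e_j + Σ_{i=2}^{n−j+1} α_i e_{j+i−1} for all 2 ≤ j ≤ n. In particular, a derivation of NF_n is uniquely determined by its value at e₁. -/
/-- The bracket of the null-filiform Leibniz algebra `NF_n` on `Fin n → ℂ`: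
`[e_i, e_1] = e_{i+1}` (0-indexed: `[e_i, e_0] = e_{i+1}`), all other basis products zero. -/
def nfMul (n : ℕ) (x y : Fin n → ℂ) : Fin n → ℂ :=
  fun k =>
    if hk : (k : ℕ) = 0 then 0
    else x ⟨(k : ℕ) - 1, by have := k.isLt; omega⟩ * y ⟨0, by have := k.isLt; omega⟩

/-!
Writing `a = D e₁`, the Leibniz rule applied to `e_{m+1} = [e_m, e₁]` gives
`D e_{m+1} = [D e_m, e₁] + [e_m, a]`: right multiplication by `e₁` shifts `D e_m` up by one
place, and `[e_m, a] = a₁ e_{m+1}`. Inducting on `m`, each shift carries the tail `a₂, a₃, …`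
one step further and adds one more copy of `a₁` on the diagonal. So `D` is determined by `a` on
the basis, hence everywhere.
-/

namespace NullFiliform

variable {n : ℕ}

def IsDerivation (D : (Fin n → ℂ) →ₗ[ℂ] (Fin n → ℂ)) : Prop :=
  ∀ x y : Fin n → ℂ, D (nfMul n x y) = nfMul n (D x) y + nfMul n x (D y)

/-- The value at `e_{m+1}` (0-indexed) of a derivation with `D e₁ = a`. -/
def derivValue (a : Fin n → ℂ) (m : ℕ) : Fin n → ℂ := fun k =>
  if (k : ℕ) = m then (m + 1 : ℂ) * a ⟨0, k.pos⟩
  else if m < k then a ⟨k - m, by omega⟩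
  else 0

theorem nfMul_single_single_zero (m : ℕ) (hm : m + 1 < n) :
    nfMul n (Pi.single ⟨m, by omega⟩ 1) (Pi.single ⟨0, by omega⟩ 1) =
      Pi.single (⟨m + 1, hm⟩ : Fin n) 1 := by
  funext k
  simp only [nfMul, Pi.single_apply, Fin.ext_iff]
  split_ifs <;> first | omega | simp

theorem nfMul_single_apply (m : ℕ) (hm : m < n) (a : Fin n → ℂ) (k : Fin n) :
    nfMul n (Pi.single ⟨m, hm⟩ 1) a k = if (k : ℕ) = m + 1 then a ⟨0, k.pos⟩ else 0 := by
  simp only [nfMul, Pi.single_apply, Fin.ext_iff]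
  split_ifs <;> first | omega | simp

theorem nfMul_single_zero_apply (x : Fin n → ℂ) (k : Fin n) :
    nfMul n x (Pi.single ⟨0, k.pos⟩ 1) k =
      if hk : (k : ℕ) = 0 then 0 else x ⟨k - 1, by omega⟩ := by
  simp [nfMul]

namespace IsDerivation

variable {D : (Fin n → ℂ) →ₗ[ℂ] (Fin n → ℂ)}

theorem apply_single_succ (hD : IsDerivation D) (m : ℕ) (hm : m + 1 < n) (k : Fin n) :
    D (Pi.single ⟨m + 1, hm⟩ 1) k =
      (if hk : (k : ℕ) = 0 then 0 else D (Pi.single ⟨m, by omega⟩ 1) ⟨k - 1, by omega⟩) +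
        if (k : ℕ) = m + 1 then D (Pi.single ⟨0, k.pos⟩ 1) ⟨0, k.pos⟩ else 0 := by
  rw [← nfMul_single_single_zero m hm, hD, Pi.add_apply, nfMul_single_apply,
    nfMul_single_zero_apply]

theorem apply_single (hD : IsDerivation D) (m : ℕ) (hm : m < n) :
    D (Pi.single ⟨m, hm⟩ 1) = derivValue (D (Pi.single ⟨0, by omega⟩ 1)) m := by
  induction m with
  | zero =>
    funext k
    simp only [derivValue, CharP.cast_eq_zero, zero_add, one_mul, Nat.sub_zero]
    split_ifs with hk
    · exact congrArg _ (Fin.ext hk)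
    · rfl
    · omega
  | succ m ih =>
    funext k
    rw [hD.apply_single_succ m hm, ih (by omega)]
    simp only [derivValue]
    split_ifs <;> try omega
    · simp
    · push_cast; ring
    · rw [add_zero]; exact congrArg _ (Fin.ext (by dsimp only; omega))
    · simp

theorem ext_of_apply_single_zero {D' : (Fin n → ℂ) →ₗ[ℂ] (Fin n → ℂ)} (hD : IsDerivation D)
    (hD' : IsDerivation D') (hn : 0 < n)
    (h₀ : D' (Pi.single ⟨0, hn⟩ 1) = D (Pi.single ⟨0, hn⟩ 1)) : D' = D := by
  refine (Pi.basisFun ℂ (Fin n)).ext fun i => ?_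
  rw [Pi.basisFun_apply, ← Fin.eta i i.isLt, hD.apply_single, hD'.apply_single, h₀]

end IsDerivation

end NullFiliform

/-- A derivation `D` of `NF_n` with `D(e₁) = ∑ αᵢ eᵢ` satisfies
`D(e_j) = j α₁ e_j + ∑_{i=2}^{n-j+1} α_i e_{j+i-1}` for `2 ≤ j ≤ n` (here 0-indexed);
in particular a derivation of `NF_n` is uniquely determined by its value at `e₁`. -/
theorem stmt_8 (n : ℕ) (hn : 0 < n)
    (D : (Fin n → ℂ) →ₗ[ℂ] (Fin n → ℂ))
    (hD : ∀ x y : Fin n → ℂ, D (nfMul n x y) = nfMul n (D x) y + nfMul n x (D y))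
    (α : Fin n → ℂ)
    (hα : D (Pi.single (⟨0, hn⟩ : Fin n) 1) = ∑ i : Fin n, α i • (Pi.single i 1 : Fin n → ℂ)) :
    (∀ j k : Fin n, 0 < (j : ℕ) →
      D (Pi.single j 1) k =
        if k = j then ((j : ℕ) + 1 : ℂ) * α ⟨0, hn⟩
        else if (j : ℕ) < (k : ℕ) then α ⟨(k : ℕ) - (j : ℕ), by have := k.isLt; omega⟩
        else 0) ∧
    (∀ D' : (Fin n → ℂ) →ₗ[ℂ] (Fin n → ℂ),
      (∀ x y : Fin n → ℂ, D' (nfMul n x y) = nfMul n (D' x) y + nfMul n x (D' y)) →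
      D' (Pi.single (⟨0, hn⟩ : Fin n) 1) = D (Pi.single (⟨0, hn⟩ : Fin n) 1) → D' = D) := by
  have hDα : D (Pi.single ⟨0, hn⟩ 1) = α := by rw [hα, ← pi_eq_sum_univ' α]
  refine ⟨fun j k _ => ?_, fun D' hD' h₀ =>
    NullFiliform.IsDerivation.ext_of_apply_single_zero hD hD' hn h₀⟩
  rw [← Fin.eta j j.isLt, NullFiliform.IsDerivation.apply_single hD, hDα]
  simp only [NullFiliform.derivValue, Fin.ext_iff]
end

section
/- Every 2-local derivation of the null-filiform Leibniz algebra NF_n is a derivation. -/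
theorem exists_forall_eq_of_twoLocal {α β F : Type*} [FunLike F α β] (P : F → Prop) (v : α)
    (hP : ∀ D D', P D → P D' → D v = D' v → D = D') (Δ : α → β)
    (h2loc : ∀ x y, ∃ D, P D ∧ D x = Δ x ∧ D y = Δ y) :
    ∃ D, P D ∧ ∀ x, Δ x = D x := by
  obtain ⟨D, hD, hDv, -⟩ := h2loc v v
  refine ⟨D, hD, fun x => ?_⟩
  obtain ⟨D', hD', hD'v, hD'x⟩ := h2loc v x
  rw [← hD'x, hP D' D hD' hD (hD'v.trans hDv.symm)]

def IsNFDerivation (n : ℕ) (D : (Fin n → ℂ) →ₗ[ℂ] (Fin n → ℂ)) : Prop :=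
  ∀ u v, D (nfMul n u v) = nfMul n (D u) v + nfMul n u (D v)

theorem nfMul_single_single (n k : ℕ) (hk : k + 1 < n) :
    nfMul n (Pi.single ⟨k, by omega⟩ 1) (Pi.single ⟨0, by omega⟩ 1) = Pi.single ⟨k + 1, hk⟩ 1 := by
  funext j
  simp only [nfMul, Pi.single_apply, Fin.ext_iff]
  split_ifs <;> simp_all; omega

namespace IsNFDerivation

variable {n : ℕ} {D D' : (Fin n → ℂ) →ₗ[ℂ] (Fin n → ℂ)}

theorem apply_single_eq (hD : IsNFDerivation n D) (hD' : IsNFDerivation n D') (hn : 0 < n)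
    (h0 : D (Pi.single ⟨0, hn⟩ 1) = D' (Pi.single ⟨0, hn⟩ 1)) :
    ∀ k (hk : k < n), D (Pi.single ⟨k, hk⟩ 1) = D' (Pi.single ⟨k, hk⟩ 1)
  | 0, _ => h0
  | k + 1, hk => by
    rw [← nfMul_single_single n k hk, hD, hD', apply_single_eq hD hD' hn h0 k (by omega), h0]

theorem ext (hD : IsNFDerivation n D) (hD' : IsNFDerivation n D') (hn : 0 < n)
    (h0 : D (Pi.single ⟨0, hn⟩ 1) = D' (Pi.single ⟨0, hn⟩ 1)) : D = D' :=
  (Pi.basisFun ℂ (Fin n)).ext fun i => by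
    simpa using hD.apply_single_eq hD' hn h0 i i.isLt

end IsNFDerivation

/-- Every 2-local derivation of the null-filiform Leibniz algebra `NF_n` is a derivation. -/
theorem stmt_9 (n : ℕ) (Δ : (Fin n → ℂ) → (Fin n → ℂ))
    (h2loc : ∀ x y : Fin n → ℂ, ∃ D : (Fin n → ℂ) →ₗ[ℂ] (Fin n → ℂ),
      (∀ u v : Fin n → ℂ, D (nfMul n u v) = nfMul n (D u) v + nfMul n u (D v)) ∧
      D x = Δ x ∧ D y = Δ y) :
    ∃ D : (Fin n → ℂ) →ₗ[ℂ] (Fin n → ℂ),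
      (∀ u v : Fin n → ℂ, D (nfMul n u v) = nfMul n (D u) v + nfMul n u (D v)) ∧
      ∀ x : Fin n → ℂ, Δ x = D x := by
  rcases n.eq_zero_or_pos with rfl | hn
  · exact exists_forall_eq_of_twoLocal (IsNFDerivation 0) 0
      (fun _ _ _ _ _ => LinearMap.ext fun _ => Subsingleton.elim _ _) Δ h2loc
  · exact exists_forall_eq_of_twoLocal (IsNFDerivation n) (Pi.single ⟨0, hn⟩ 1)
      (fun _ _ hD hD' h0 => hD.ext hD' hn h0) Δ h2loc
end
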